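/- Let β > 0, let t ≥ 1, let d_0, d_1, …, d_t be positive natural numbers, and for each j ∈ {1,…,t} let M_j be a real d_{j-1}×d_j matrix with the LRP-β column structure. Let q ∈ ℝ^{d_t} satisfy q_u ≥ 0 for all u and ∑_u q_u = 1, and set w = M_1 · M_2 · ⋯ · M_t · q ∈ ℝ^{d_0}. Then every component of w satisfies −2^{t-1}·β·(1+β)^{t-1} ≤ w_i ≤ 2^{t-1}·(1+β)^t; in particular the width of the value range is bounded by 2^{t-1}·(1+2β)·(1+β)^{t-1}. -/
import Mathlib


open Matrix

/-- `M` has the LRP-β column structure: every column `k` of `M` is of the form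
`(1+β)·p − β·q` for nonnegative probability vectors `p, q` with disjoint supports. -/
def LRPBetaCols {S R : ℕ} (β : ℝ) (M : Matrix (Fin S) (Fin R) ℝ) : Prop :=
  ∀ k : Fin R, ∃ p q : Fin S → ℝ,
    (∀ i, 0 ≤ p i) ∧ (∀ i, 0 ≤ q i) ∧
    (∑ i, p i) = 1 ∧ (∑ i, q i) = 1 ∧
    (∀ i, p i * q i = 0) ∧
    (∀ i, M i k = (1 + β) * p i - β * q i)

/-- The chained matrix product `M 0 * M 1 * ⋯ * M (n-1)` of matrices
`M l : Matrix (Fin (d l)) (Fin (d (l+1))) ℝ`. -/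
noncomputable def chainProd (d : ℕ → ℕ)
    (M : ∀ l : ℕ, Matrix (Fin (d l)) (Fin (d (l + 1))) ℝ) :
    ∀ n : ℕ, Matrix (Fin (d 0)) (Fin (d n)) ℝ
  | 0 => 1
  | n + 1 => chainProd d M n * M n

private lemma max_half (x : ℝ) : max x 0 = (x + |x|) / 2 := by
  rcases le_total 0 x with h | h
  · rw [abs_of_nonneg h, max_eq_left h]; ring
  · rw [abs_of_nonpos h, max_eq_right h]; ring

private lemma max_mul_decomp (c v : ℝ) :
    max (c * v) 0 = max c 0 * max v 0 + max (-c) 0 * max (-v) 0 := by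
  simp only [max_half, abs_mul, abs_neg]
  ring

private def gmap (β : ℝ) : ℝ × ℝ → ℝ × ℝ :=
  fun p => ((1 + β) * p.1 + β * p.2, β * p.1 + (1 + β) * p.2)

private lemma lrp_step {S R : ℕ} {β : ℝ} (hβ : 0 ≤ β) {M : Matrix (Fin S) (Fin R) ℝ}
    (hM : LRPBetaCols β M) (v : Fin R → ℝ) :
    (∑ i, max ((M *ᵥ v) i) 0) ≤
        (1 + β) * (∑ k, max (v k) 0) + β * (∑ k, max (-v k) 0) ∧
      (∑ i, max (-((M *ᵥ v) i)) 0) ≤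
        β * (∑ k, max (v k) 0) + (1 + β) * (∑ k, max (-v k) 0) := by
  have hdec : ∀ k : Fin S → ℝ, True := fun _ => trivial
  -- per-column computation
  have hcol : ∀ k : Fin R,
      (∑ i, max (M i k * v k) 0) = (1 + β) * max (v k) 0 + β * max (-v k) 0 ∧
      (∑ i, max (-(M i k) * v k) 0) = β * max (v k) 0 + (1 + β) * max (-v k) 0 := by
    intro k
    obtain ⟨p, q, hp0, hq0, hps, hqs, hpq, hMk⟩ := hM k
    have hparts : ∀ i, max (M i k) 0 = (1 + β) * p i ∧ max (-(M i k)) 0 = β * q i := by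
      intro i
      rcases mul_eq_zero.mp (hpq i) with h | h
      · have h1 : M i k = -(β * q i) := by rw [hMk i, h]; ring
        constructor
        · rw [h1, h, mul_zero]
          exact max_eq_right (neg_nonpos.mpr (mul_nonneg hβ (hq0 i)))
        · rw [h1, neg_neg]
          exact max_eq_left (mul_nonneg hβ (hq0 i))
      · have h1 : M i k = (1 + β) * p i := by rw [hMk i, h]; ring
        constructor
        · rw [h1]
          exact max_eq_left (mul_nonneg (by linarith) (hp0 i))
        · rw [h1, h, mul_zero]
          exact max_eq_right (neg_nonpos.mpr (mul_nonneg (by linarith) (hp0 i)))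
    constructor
    · calc (∑ i, max (M i k * v k) 0)
          = ∑ i, ((1 + β) * max (v k) 0 * p i + β * max (-v k) 0 * q i) := by
            refine Finset.sum_congr rfl fun i _ => ?_
            rw [max_mul_decomp, (hparts i).1, (hparts i).2]; ring
        _ = (1 + β) * max (v k) 0 * (∑ i, p i) + β * max (-v k) 0 * (∑ i, q i) := by
            rw [Finset.sum_add_distrib, ← Finset.mul_sum, ← Finset.mul_sum]
        _ = (1 + β) * max (v k) 0 + β * max (-v k) 0 := by rw [hps, hqs]; ring
    · calc (∑ i, max (-(M i k) * v k) 0)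
          = ∑ i, (β * max (v k) 0 * q i + (1 + β) * max (-v k) 0 * p i) := by
            refine Finset.sum_congr rfl fun i _ => ?_
            rw [max_mul_decomp, neg_neg, (hparts i).1, (hparts i).2]; ring
        _ = β * max (v k) 0 * (∑ i, q i) + (1 + β) * max (-v k) 0 * (∑ i, p i) := by
            rw [Finset.sum_add_distrib, ← Finset.mul_sum, ← Finset.mul_sum]
        _ = β * max (v k) 0 + (1 + β) * max (-v k) 0 := by rw [hps, hqs]; ring
  constructor
  · calc (∑ i, max ((M *ᵥ v) i) 0)
        ≤ ∑ i, ∑ k, max (M i k * v k) 0 := by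
          refine Finset.sum_le_sum fun i _ => ?_
          rw [mulVec, dotProduct]
          exact max_le (Finset.sum_le_sum fun k _ => le_max_left _ _)
            (Finset.sum_nonneg fun k _ => le_max_right _ _)
      _ = ∑ k, ∑ i, max (M i k * v k) 0 := Finset.sum_comm
      _ = ∑ k, ((1 + β) * max (v k) 0 + β * max (-v k) 0) :=
          Finset.sum_congr rfl fun k _ => (hcol k).1
      _ = (1 + β) * (∑ k, max (v k) 0) + β * (∑ k, max (-v k) 0) := by
          rw [Finset.sum_add_distrib, Finset.mul_sum, Finset.mul_sum]
  · calc (∑ i, max (-((M *ᵥ v) i)) 0)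
        ≤ ∑ i, ∑ k, max (-(M i k) * v k) 0 := by
          refine Finset.sum_le_sum fun i _ => ?_
          have : -((M *ᵥ v) i) = ∑ k, -(M i k) * v k := by
            rw [mulVec, dotProduct, ← Finset.sum_neg_distrib]
            exact Finset.sum_congr rfl fun k _ => by ring
          rw [this]
          exact max_le (Finset.sum_le_sum fun k _ => le_max_left _ _)
            (Finset.sum_nonneg fun k _ => le_max_right _ _)
      _ = ∑ k, ∑ i, max (-(M i k) * v k) 0 := Finset.sum_comm
      _ = ∑ k, (β * max (v k) 0 + (1 + β) * max (-v k) 0) :=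
          Finset.sum_congr rfl fun k _ => (hcol k).2
      _ = β * (∑ k, max (v k) 0) + (1 + β) * (∑ k, max (-v k) 0) := by
          rw [Finset.sum_add_distrib, Finset.mul_sum, Finset.mul_sum]

private lemma chain_bound {β : ℝ} (hβ : 0 ≤ β) (d : ℕ → ℕ)
    (M : ∀ l : ℕ, Matrix (Fin (d l)) (Fin (d (l + 1))) ℝ) :
    ∀ n : ℕ, (∀ j, j < n → LRPBetaCols β (M j)) →
      ∀ (v : Fin (d n) → ℝ) (x y : ℝ),
        (∑ k, max (v k) 0) ≤ x → (∑ k, max (-v k) 0) ≤ y →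
        (∑ i, max ((chainProd d M n *ᵥ v) i) 0) ≤ ((gmap β)^[n] (x, y)).1 ∧
        (∑ i, max (-((chainProd d M n *ᵥ v) i)) 0) ≤ ((gmap β)^[n] (x, y)).2 := by
  intro n
  induction n with
  | zero =>
    intro _ v x y hx hy
    simpa [chainProd, Matrix.one_mulVec] using ⟨hx, hy⟩
  | succ m ih =>
    intro hMs v x y hx hy
    have hstep := lrp_step hβ (hMs m (Nat.lt_succ_self m)) v
    have hx' : (∑ k, max ((M m *ᵥ v) k) 0) ≤ (gmap β (x, y)).1 := by
      refine hstep.1.trans ?_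
      simp only [gmap]
      have h1 : (0:ℝ) ≤ 1 + β := by linarith
      exact add_le_add (mul_le_mul_of_nonneg_left hx h1)
        (mul_le_mul_of_nonneg_left hy hβ)
    have hy' : (∑ k, max (-((M m *ᵥ v) k)) 0) ≤ (gmap β (x, y)).2 := by
      refine hstep.2.trans ?_
      simp only [gmap]
      have h1 : (0:ℝ) ≤ 1 + β := by linarith
      exact add_le_add (mul_le_mul_of_nonneg_left hx hβ)
        (mul_le_mul_of_nonneg_left hy h1)
    have hchain : chainProd d M (m + 1) *ᵥ v = chainProd d M m *ᵥ (M m *ᵥ v) := by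
      rw [chainProd, ← Matrix.mulVec_mulVec]
    have := ih (fun j hj => hMs j (hj.trans (Nat.lt_succ_self m))) (M m *ᵥ v)
      (gmap β (x, y)).1 (gmap β (x, y)).2 hx' hy'
    rw [hchain, Function.iterate_succ_apply]
    exact this

private lemma gmap_iter_bound {β : ℝ} (hβ : 0 ≤ β) :
    ∀ n : ℕ, 1 ≤ n →
      ((gmap β)^[n] ((1:ℝ), (0:ℝ))).1 ≤ 2 ^ (n - 1) * (1 + β) ^ n ∧
      ((gmap β)^[n] ((1:ℝ), (0:ℝ))).2 ≤ 2 ^ (n - 1) * β * (1 + β) ^ (n - 1) := by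
  intro n hn
  induction n with
  | zero => omega
  | succ m ih =>
    rcases Nat.eq_zero_or_pos m with rfl | hm
    · norm_num [gmap]
    · obtain ⟨h1, h2⟩ := ih hm
      obtain ⟨s, rfl⟩ := Nat.exists_eq_succ_of_ne_zero (Nat.pos_iff_ne_zero.mp hm)
      rw [Function.iterate_succ_apply']
      simp only [gmap, Nat.succ_sub_one] at h1 h2 ⊢
      set P := ((gmap β)^[s + 1] ((1:ℝ), (0:ℝ))).1 with hP
      set N := ((gmap β)^[s + 1] ((1:ℝ), (0:ℝ))).2 with hN
      have hA : (0:ℝ) ≤ 2 ^ s := by positivity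
      have hB : (0:ℝ) ≤ (1 + β) ^ s := by positivity
      rw [pow_succ (2:ℝ), pow_succ (1+β), pow_succ (1+β)] at *
      constructor
      · nlinarith [mul_nonneg hA hB, mul_nonneg (mul_nonneg hA hB) hβ,
          mul_nonneg (mul_nonneg (mul_nonneg hA hB) hβ) hβ]
      · nlinarith [mul_nonneg hA hB, mul_nonneg (mul_nonneg hA hB) hβ,
          mul_nonneg (mul_nonneg (mul_nonneg hA hB) hβ) hβ]

/-- Componentwise value range for LRP-β attribution maps: every component of
`w = M_1 ⋯ M_t q` lies in `[−2^{t-1}·β·(1+β)^{t-1}, 2^{t-1}·(1+β)^t]`; in particular the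
width of this value range is bounded by `2^{t-1}·(1+2β)·(1+β)^{t-1}`. -/
theorem lrp_beta_componentwise_value_range
    (β : ℝ) (hβ : 0 < β) (t : ℕ) (ht : 1 ≤ t) (d : ℕ → ℕ)
    (hd : ∀ j, j ≤ t → 0 < d j)
    (M : ∀ l : ℕ, Matrix (Fin (d l)) (Fin (d (l + 1))) ℝ)
    (hM : ∀ j, j < t → LRPBetaCols β (M j))
    (q : Fin (d t) → ℝ) (hq : ∀ u, 0 ≤ q u) (hqs : ∑ u, q u = 1)
    (w : Fin (d 0) → ℝ) (hw : w = (chainProd d M t) *ᵥ q) :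
    (∀ i, -(2 ^ (t - 1) * β * (1 + β) ^ (t - 1)) ≤ w i ∧
        w i ≤ 2 ^ (t - 1) * (1 + β) ^ t) ∧
      2 ^ (t - 1) * (1 + β) ^ t - (-(2 ^ (t - 1) * β * (1 + β) ^ (t - 1))) ≤
        2 ^ (t - 1) * (1 + 2 * β) * (1 + β) ^ (t - 1) := by
  have hx0 : (∑ u, max (q u) 0) ≤ 1 := by
    rw [show (∑ u, max (q u) 0) = ∑ u, q u from
      Finset.sum_congr rfl fun u _ => max_eq_left (hq u), hqs]
  have hy0 : (∑ u, max (-q u) 0) ≤ 0 := by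
    refine le_of_eq (Finset.sum_eq_zero fun u _ => ?_)
    exact max_eq_right (neg_nonpos.mpr (hq u))
  have hcb := chain_bound hβ.le d M t hM q 1 0 hx0 hy0
  have hib := gmap_iter_bound hβ.le t ht
  rw [← hw] at hcb
  have hpos : (∑ i, max (w i) 0) ≤ 2 ^ (t - 1) * (1 + β) ^ t := hcb.1.trans hib.1
  have hneg : (∑ i, max (-w i) 0) ≤ 2 ^ (t - 1) * β * (1 + β) ^ (t - 1) :=
    hcb.2.trans hib.2
  constructor
  · intro i
    have h1 : max (w i) 0 ≤ ∑ i, max (w i) 0 :=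
      Finset.single_le_sum (f := fun i => max (w i) 0)
        (fun j _ => le_max_right _ _) (Finset.mem_univ i)
    have h2 : max (-w i) 0 ≤ ∑ i, max (-w i) 0 :=
      Finset.single_le_sum (f := fun i => max (-w i) 0)
        (fun j _ => le_max_right _ _) (Finset.mem_univ i)
    have h3 : w i ≤ max (w i) 0 := le_max_left _ _
    have h4 : -w i ≤ max (-w i) 0 := le_max_left _ _
    constructor <;> linarith
  · obtain ⟨s, rfl⟩ := Nat.exists_eq_succ_of_ne_zero (by omega : t ≠ 0)
    simp only [Nat.succ_sub_one]
    rw [pow_succ (1 + β)]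
    ring_nf
    rfl
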